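/- arXiv:2010.04370 — 3 statements merged into one kernel-verified Lean document; each statement's English description precedes it below -/
import Mathlib

section
/- Let K be a positive integer, N a positive integer with K ≤ N/2, and θ* = arcsin(√(K/N)). If θ' is a real with θ' ≈_{1.11} θ*, then 1 + 1/(2N·sin²(θ')) ≤ 1 + 1.33/(2K) < 1 + 1/K. -/
set_option maxHeartbeats 1000000

open Real

theorem stmt_2 (K N : ℕ) (hK : 0 < K) (hN : 0 < N) (hKN : 2 * K ≤ N)
    (θ' : ℝ)
    (hlo : 1 / 1.11 ≤ θ' / Real.arcsin (Real.sqrt (K / N)))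
    (hhi : θ' / Real.arcsin (Real.sqrt (K / N)) ≤ 1.11) :
    1 + 1 / (2 * N * Real.sin θ' ^ 2) ≤ 1 + 1.33 / (2 * K) ∧
      1 + 1.33 / (2 * K) < 1 + 1 / (K : ℝ) := by
  have hKpos : (0:ℝ) < K := by exact_mod_cast hK
  have hNpos : (0:ℝ) < N := by exact_mod_cast hN
  have hr : (0:ℝ) < (K:ℝ)/N := div_pos hKpos hNpos
  have hhalf : (K:ℝ)/N ≤ 1/2 := by
    rw [div_le_div_iff₀ hNpos two_pos]
    have : (2*K:ℝ) ≤ N := by exact_mod_cast hKN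
    linarith
  set s := Real.sqrt ((K:ℝ)/N) with hs
  have hspos : 0 < s := Real.sqrt_pos.mpr hr
  have hs1 : s ≤ 1 := by
    rw [hs, show (1:ℝ) = Real.sqrt 1 by simp]
    exact Real.sqrt_le_sqrt (by linarith)
  set θ := Real.arcsin s with hθdef
  have hθpos : 0 < θ := Real.arcsin_pos.mpr hspos
  have hsinθ : Real.sin θ = s := Real.sin_arcsin (by linarith) hs1
  have hθle : θ ≤ π/4 := by
    have h4 : π/4 ∈ Set.Icc (-(π/2)) (π/2) := by
      constructor <;> nlinarith [Real.pi_pos]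
    rw [hθdef, Real.arcsin_le_iff_le_sin ⟨by linarith, hs1⟩ h4, Real.sin_pi_div_four]
    have h12 : Real.sqrt (1/2) = Real.sqrt 2 / 2 := by
      rw [show (1:ℝ)/2 = (Real.sqrt 2 / 2)^2 by
        rw [div_pow, Real.sq_sqrt (by norm_num : (0:ℝ) ≤ 2)]; norm_num]
      exact Real.sqrt_sq (by positivity)
    rw [hs, ← h12]
    exact Real.sqrt_le_sqrt hhalf
  clear_value s θ
  -- normalize scientific literals
  have hlo' : (100/111 : ℝ) ≤ θ' / θ := by norm_num at hlo ⊢; linarith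
  have hhi' : θ' / θ ≤ (111/100 : ℝ) := by norm_num at hhi ⊢; linarith
  have hθ'lo : (100/111 : ℝ) * θ ≤ θ' := by
    have h := mul_le_mul_of_nonneg_right hlo' hθpos.le
    rwa [div_mul_cancel₀ _ hθpos.ne'] at h
  have hθ'hi : θ' ≤ (111/100 : ℝ) * θ := by
    have h := mul_le_mul_of_nonneg_right hhi' hθpos.le
    rwa [div_mul_cancel₀ _ hθpos.ne'] at h
  have hθ'pos : 0 < θ' := lt_of_lt_of_le (by positivity) hθ'lo
  have hθ'ltpi2 : θ' < π/2 := by nlinarith [Real.pi_pos]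
  -- key: sin θ' ≥ (100/111) * s
  have hkey : (100/111 : ℝ) * s ≤ Real.sin θ' := by
    rcases le_or_gt θ θ' with h | h
    · have hmono : Real.sin θ ≤ Real.sin θ' :=
        Real.sin_le_sin_of_le_of_le_pi_div_two (by linarith) (le_of_lt hθ'ltpi2) h
      rw [hsinθ] at hmono
      nlinarith
    · set t := θ' / θ with ht
      clear_value t
      have htpos : 0 < t := by rw [ht]; exact div_pos hθ'pos hθpos
      have ht1 : t ≤ 1 := by rw [ht]; exact (div_le_one hθpos).mpr h.le
      have hθπ : θ ∈ Set.Icc (0:ℝ) π := ⟨hθpos.le, by nlinarith [Real.pi_pos]⟩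
      have h0 : (0:ℝ) ∈ Set.Icc (0:ℝ) π := ⟨le_rfl, Real.pi_pos.le⟩
      have hc := strictConcaveOn_sin_Icc.concaveOn.2 h0 hθπ
        (by linarith : (0:ℝ) ≤ 1 - t) htpos.le (by ring)
      have hc' : t * Real.sin θ ≤ Real.sin (t * θ) := by
        simp only [smul_eq_mul, Real.sin_zero, mul_zero, zero_add] at hc
        exact hc
      have htθ : t * θ = θ' := by rw [ht]; field_simp
      rw [htθ, hsinθ] at hc'
      nlinarith
  have hsin'pos : 0 < Real.sin θ' := lt_of_lt_of_le (by positivity) hkey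
  have hsq : (10000/12321 : ℝ) * ((K:ℝ)/N) ≤ Real.sin θ' ^ 2 := by
    have h2 : ((100/111:ℝ) * s)^2 ≤ Real.sin θ' ^ 2 :=
      pow_le_pow_left₀ (by positivity) hkey 2
    have hss : s^2 = (K:ℝ)/N := by rw [hs]; exact Real.sq_sqrt hr.le
    calc (10000/12321 : ℝ) * ((K:ℝ)/N) = ((100/111:ℝ) * s)^2 := by
          rw [mul_pow, hss]; norm_num
      _ ≤ _ := h2
  constructor
  · have hA : (10000/12321 : ℝ) * (2 * K) ≤ 2 * N * Real.sin θ' ^ 2 := by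
      have h := mul_le_mul_of_nonneg_left hsq (by positivity : (0:ℝ) ≤ 2 * N)
      calc (10000/12321 : ℝ) * (2*K) = 2 * N * ((10000/12321:ℝ) * ((K:ℝ)/N)) := by
            rw [show 2 * (N:ℝ) * ((10000/12321:ℝ) * ((K:ℝ)/N)) = (10000/12321:ℝ) * (2 * ((K:ℝ)/N*N)) by ring, div_mul_cancel₀ _ hNpos.ne']
        _ ≤ _ := h
    have hApos : (0:ℝ) < 2 * N * Real.sin θ' ^ 2 := by positivity
    have hmain : 1 / (2 * N * Real.sin θ' ^ 2) ≤ (133/100 : ℝ) / (2 * K) := by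
      rw [div_le_div_iff₀ hApos (by positivity)]
      nlinarith
    norm_num at hmain ⊢
    linarith
  · have h2 : (133/100:ℝ) / (2*K) < 1 / K := by
      rw [div_lt_div_iff₀ (by positivity) hKpos]
      nlinarith
    norm_num at h2 ⊢
    linarith
end

section
/- Let θ', ε' > 0 with ε' ≤ 1, and suppose θ₀ < θ₁ are positive reals with θ₀ ≈_{1.11} θ', θ₁ ≈_{1.11} θ', θ₁ ≤ 1.1·0.0001, and θ₁/θ₀ > 1 + ε'/6.1. Define u_i = 1.01^i for i = 0, 1, ..., L, where L is minimal with 1.01^L ≥ 1.2π/(θ'·ε'). Let η = θ₁ - θ₀. Then there exists 0 ≤ i ≤ L such that u_i·η ≈_{1.01} π/8, i.e., (π/8)/1.01 ≤ u_i·η ≤ 1.01·(π/8). -/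
theorem stmt_4 (θ' ε' θ₀ θ₁ : ℝ) (hθ' : 0 < θ')
    (hε'0 : 0 < ε') (hε'1 : ε' ≤ 1)
    (hθ₀ : 0 < θ₀) (hlt : θ₀ < θ₁)
    (h0lo : 1 / 1.11 ≤ θ₀ / θ') (h0hi : θ₀ / θ' ≤ 1.11)
    (h1lo : 1 / 1.11 ≤ θ₁ / θ') (h1hi : θ₁ / θ' ≤ 1.11)
    (hθ₁ : θ₁ ≤ 1.1 * 0.0001)
    (hratio : 1 + ε' / 6.1 < θ₁ / θ₀)
    (L : ℕ) (hL : 1.2 * Real.pi / (θ' * ε') ≤ (1.01 : ℝ) ^ L)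
    (hLmin : ∀ L' < L, (1.01 : ℝ) ^ L' < 1.2 * Real.pi / (θ' * ε')) :
    ∃ i ≤ L, (Real.pi / 8) / 1.01 ≤ (1.01 : ℝ) ^ i * (θ₁ - θ₀) ∧
      (1.01 : ℝ) ^ i * (θ₁ - θ₀) ≤ 1.01 * (Real.pi / 8) := by
  classical
  have hη : 0 < θ₁ - θ₀ := by linarith
  have hpi3 : (3.14 : ℝ) < Real.pi := by
    have := Real.pi_gt_d6; linarith
  have hθ₀' : θ' / 1.11 ≤ θ₀ := by
    have h := (div_le_div_iff₀ (by norm_num) hθ').mp h0lo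
    rw [div_le_iff₀ (by norm_num : (0:ℝ) < 1.11)]
    linarith
  have hηlb : θ' * ε' / 6.771 ≤ θ₁ - θ₀ := by
    have h1 : θ₀ * (1 + ε' / 6.1) < θ₁ := by
      have := (lt_div_iff₀ hθ₀).mp hratio
      linarith
    have h3 : θ' / 1.11 * (ε' / 6.1) ≤ θ₀ * (ε' / 6.1) :=
      mul_le_mul_of_nonneg_right hθ₀' (by positivity)
    have h4 : θ' / 1.11 * (ε' / 6.1) = θ' * ε' / 6.771 := by ring
    nlinarith
  have hPL : (Real.pi / 8) / 1.01 ≤ (1.01 : ℝ) ^ L * (θ₁ - θ₀) := by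
    have h1 : 1.2 * Real.pi / (θ' * ε') * (θ' * ε' / 6.771) ≤
        (1.01 : ℝ) ^ L * (θ₁ - θ₀) :=
      mul_le_mul hL hηlb (by positivity) (by positivity)
    have h2 : 1.2 * Real.pi / (θ' * ε') * (θ' * ε' / 6.771) = 1.2 * Real.pi / 6.771 := by
      field_simp
    rw [h2] at h1
    have hp := Real.pi_pos
    rw [div_div, div_le_iff₀ (by norm_num : (0:ℝ) < 8 * 1.01)]
    rw [div_le_iff₀ (by norm_num : (0:ℝ) < 6.771)] at h1
    nlinarith
  have hex : ∃ i, (Real.pi / 8) / 1.01 ≤ (1.01 : ℝ) ^ i * (θ₁ - θ₀) := ⟨L, hPL⟩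
  refine ⟨Nat.find hex, Nat.find_min' hex hPL, Nat.find_spec hex, ?_⟩
  rcases Nat.eq_zero_or_pos (Nat.find hex) with h0 | hpos
  · exfalso
    have hsp := Nat.find_spec hex
    rw [h0] at hsp
    simp only [pow_zero, one_mul] at hsp
    rw [div_div] at hsp
    norm_num at hsp
    linarith
  · obtain ⟨j, hij⟩ := Nat.exists_eq_succ_of_ne_zero (Nat.pos_iff_ne_zero.mp hpos)
    have hj : ¬ (Real.pi / 8) / 1.01 ≤ (1.01 : ℝ) ^ j * (θ₁ - θ₀) :=
      Nat.find_min hex (by omega)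
    push_neg at hj
    rw [hij, pow_succ]
    rw [div_div, lt_div_iff₀ (by norm_num : (0:ℝ) < 8 * 1.01)] at hj
    have hp := Real.pi_pos
    nlinarith
end

section
/- Let θ₀, θ₁ ∈ ℝ be in the same quadrant (i.e., there exists an integer m such that both θ₀ and θ₁ lie in the interval [mπ/2, (m+1)π/2)), and suppose |θ₁ − θ₀| ≥ π/(8·1.5) = π/12. Then |sin²(θ₁) − sin²(θ₀)| ≥ 0.04. -/
open Real

lemma aux_sin_lower {x : ℝ} (h1 : Real.pi/12 ≤ x) (h2 : x ≤ Real.pi - Real.pi/12) :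
    Real.sin (Real.pi/12) ≤ Real.sin x := by
  have hpi := Real.pi_pos
  rcases le_total x (Real.pi/2) with h | h
  · exact Real.strictMonoOn_sin.monotoneOn ⟨by linarith, by linarith⟩ ⟨by linarith, h⟩ h1
  · rw [← Real.sin_pi_sub x]
    exact Real.strictMonoOn_sin.monotoneOn ⟨by linarith, by linarith⟩
      ⟨by linarith, by linarith⟩ (by linarith)

theorem stmt_7 (θ₀ θ₁ : ℝ)
    (hquad : ∃ m : ℤ, θ₀ ∈ Set.Ico (m * Real.pi / 2) ((m + 1) * Real.pi / 2) ∧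
      θ₁ ∈ Set.Ico (m * Real.pi / 2) ((m + 1) * Real.pi / 2))
    (hgap : Real.pi / 12 ≤ |θ₁ - θ₀|) :
    0.04 ≤ |Real.sin θ₁ ^ 2 - Real.sin θ₀ ^ 2| := by
  obtain ⟨m, ⟨h0l, h0u⟩, ⟨h1l, h1u⟩⟩ := hquad
  have hpi := Real.pi_pos
  have key : Real.sin θ₁ ^ 2 - Real.sin θ₀ ^ 2
      = Real.sin (θ₁ + θ₀) * Real.sin (θ₁ - θ₀) := by
    rw [Real.sin_add, Real.sin_sub]
    nlinarith [Real.sin_sq_add_cos_sq θ₁, Real.sin_sq_add_cos_sq θ₀]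
  rw [key, abs_mul]
  -- bound on the difference factor
  have hd2 : |θ₁ - θ₀| ≤ Real.pi/2 := by
    rw [abs_le]; constructor <;> linarith
  have hmono : Real.sin (Real.pi/12) ≤ Real.sin |θ₁ - θ₀| :=
    Real.strictMonoOn_sin.monotoneOn ⟨by linarith, by linarith⟩
      ⟨by linarith [abs_nonneg (θ₁ - θ₀)], hd2⟩ hgap
  have habs : Real.sin |θ₁ - θ₀| ≤ |Real.sin (θ₁ - θ₀)| := by
    rcases abs_cases (θ₁ - θ₀) with ⟨h, _⟩ | ⟨h, _⟩
    · rw [h]; exact le_abs_self _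
    · rw [h, Real.sin_neg]; exact neg_le_abs _
  -- bound on the sum factor
  have hs1 : m * Real.pi + Real.pi/12 ≤ θ₁ + θ₀ := by
    rcases abs_cases (θ₁ - θ₀) with ⟨h, _⟩ | ⟨h, _⟩ <;> rw [h] at hgap <;> linarith
  have hs2 : θ₁ + θ₀ ≤ (m + 1) * Real.pi - Real.pi/12 := by
    rcases abs_cases (θ₁ - θ₀) with ⟨h, _⟩ | ⟨h, _⟩ <;> rw [h] at hgap <;> linarith
  have hsum : Real.sin (Real.pi/12) ≤ |Real.sin (θ₁ + θ₀)| := by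
    have heq : θ₁ + θ₀ = (θ₁ + θ₀ - m * Real.pi) + m * Real.pi := by ring
    have hone : |((-1:ℝ)) ^ m| = 1 := by
      rcases Int.even_or_odd m with he | ho
      · rw [he.neg_one_zpow]; norm_num
      · rw [ho.neg_one_zpow]; norm_num
    rw [heq, Real.sin_add_int_mul_pi, abs_mul, hone, one_mul]
    have := aux_sin_lower (x := θ₁ + θ₀ - m * Real.pi) (by linarith) (by linarith)
    calc Real.sin (Real.pi/12) ≤ Real.sin (θ₁ + θ₀ - m * Real.pi) := this
      _ ≤ |Real.sin (θ₁ + θ₀ - m * Real.pi)| := le_abs_self _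
  have hsin_pos : 0 ≤ Real.sin (Real.pi/12) :=
    Real.sin_nonneg_of_nonneg_of_le_pi (by positivity) (by linarith)
  have hprod : Real.sin (Real.pi/12) * Real.sin (Real.pi/12)
      ≤ |Real.sin (θ₁ + θ₀)| * |Real.sin (θ₁ - θ₀)| :=
    mul_le_mul hsum (hmono.trans habs) hsin_pos (abs_nonneg _)
  have hval : Real.sin (Real.pi/12) * Real.sin (Real.pi/12) = 1/2 - Real.sqrt 3 / 4 := by
    have h6 : Real.cos (Real.pi/6) = Real.sqrt 3 / 2 := Real.cos_pi_div_six
    have h1 := Real.sin_sq (Real.pi/12)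
    have h2 := Real.cos_sq (Real.pi/12)
    rw [show 2 * (Real.pi/12) = Real.pi/6 by ring, h6] at h2
    nlinarith [h1, h2]
  have hsqrt : Real.sqrt 3 ≤ 1.84 := by
    nlinarith [Real.sq_sqrt (by norm_num : (3:ℝ) ≥ 0), Real.sqrt_nonneg 3]
  calc (0.04 : ℝ) ≤ 1/2 - Real.sqrt 3 / 4 := by linarith
    _ = Real.sin (Real.pi/12) * Real.sin (Real.pi/12) := hval.symm
    _ ≤ _ := hprod
end
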